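/- arXiv:2107.06023 — 2 statements merged into one kernel-verified Lean document; each statement's English description precedes it below -/
import Mathlib

section
/- For every integer $p \ge 0$, the identity $[p]! \sum_{k+m=p,\ k,m\ge 0} \dfrac{v^{-2km+2m}}{[2k]^{!!}\,[2m]^{!!}} = v^{p(3-p)/2}$ holds in $\mathbb{Q}(v)$. -/
noncomputable section

abbrev K : Type := RatFunc ℚ

/-- The indeterminate `v` in `ℚ(v)`. -/
def v : K := RatFunc.X

/-- Quantum integer `[m] = (v^m - v^{-m})/(v - v^{-1})`. -/
def qint (m : ℤ) : K := (v ^ m - v ^ (-m)) / (v - v⁻¹)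

/-- Quantum factorial `[r]! = ∏_{i=1}^r [i]`. -/
def qfact (r : ℕ) : K := ∏ i ∈ Finset.range r, qint ((i : ℤ) + 1)

/-- Quantum double factorial `[2r]!! = ∏_{i=1}^r [2i]`. -/
def qdfact (r : ℕ) : K := ∏ i ∈ Finset.range r, qint (2 * ((i : ℤ) + 1))

/-- Balanced Gaussian binomial coefficient `[m][m-1]⋯[m-r+1]/[r]!`. -/
def qbinom (m : ℤ) (r : ℕ) : K := (∏ i ∈ Finset.range r, qint (m - (i : ℤ))) / qfact r

/-- Gaussian binomial with integer lower index, vanishing for negative lower index. -/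
def qbinomZ (m r : ℤ) : K := if 0 ≤ r then qbinom m r.toNat else 0

/-! Write `S p` for the sum. Splitting `[2p+2] = v^{2k}[2m] + v^{-2m}[2k]` over the pairs
`k + m = p + 1` and absorbing `[2m]` (resp. `[2k]`) into the double factorial gives
`[2p+2] S (p+1) = (v^2 + v^{-2p}) S p`. Since `[2p+2] = (v^{p+1} + v^{-p-1}) [p+1]` and
`v^2 + v^{-2p} = v^{1-p} (v^{p+1} + v^{-p-1})`, this is `[p+1] S (p+1) = v^{1-p} S p`, and the
closed form follows by induction. Nonvanishing of `[n]` for `n ≠ 0` comes from the degree of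
`v^n` in `ℚ(v)`. -/

open Finset

lemma v_ne_zero : v ≠ 0 := RatFunc.X_ne_zero

lemma intDegree_v_zpow (n : ℤ) : (v ^ n).intDegree = n := by
  induction n using Int.induction_on with
  | zero => simp
  | succ i ih =>
    rw [zpow_add_one₀ v_ne_zero, RatFunc.intDegree_mul (zpow_ne_zero _ v_ne_zero) v_ne_zero, ih,
      v, RatFunc.intDegree_X]
  | pred i ih =>
    rw [zpow_sub_one₀ v_ne_zero, RatFunc.intDegree_mul (zpow_ne_zero _ v_ne_zero)
      (inv_ne_zero v_ne_zero), ih, RatFunc.intDegree_inv, v, RatFunc.intDegree_X]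
    ring

lemma v_zpow_injective : Function.Injective (v ^ · : ℤ → K) := fun a b h => by
  simpa only [intDegree_v_zpow] using congrArg RatFunc.intDegree h

lemma v_zpow_sub_v_zpow_neg_ne_zero {n : ℤ} (hn : n ≠ 0) : v ^ n - v ^ (-n) ≠ 0 :=
  sub_ne_zero.mpr fun h => hn (by linarith [v_zpow_injective h])

lemma qint_ne_zero {n : ℤ} (hn : n ≠ 0) : qint n ≠ 0 := by
  refine div_ne_zero (v_zpow_sub_v_zpow_neg_ne_zero hn) ?_
  simpa using v_zpow_sub_v_zpow_neg_ne_zero one_ne_zero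

lemma qint_zero : qint 0 = 0 := by simp [qint]

lemma qint_add (a b : ℤ) : qint (a + b) = v ^ a * qint b + v ^ (-b) * qint a := by
  simp only [qint, neg_add, zpow_add₀ v_ne_zero]
  ring

lemma qint_two_mul (n : ℤ) : qint (2 * n) = (v ^ n + v ^ (-n)) * qint n := by
  simp only [qint, two_mul, neg_add, zpow_add₀ v_ne_zero]
  ring

lemma qfact_succ (n : ℕ) : qfact (n + 1) = qfact n * qint ((n : ℤ) + 1) :=
  prod_range_succ _ _

lemma qdfact_succ (n : ℕ) : qdfact (n + 1) = qdfact n * qint (2 * ((n : ℤ) + 1)) :=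
  prod_range_succ _ _

lemma qdfact_ne_zero (n : ℕ) : qdfact n ≠ 0 :=
  prod_ne_zero_iff.mpr fun _ _ => qint_ne_zero (by omega)

def qterm (k m : ℕ) : K := v ^ (2 * (m : ℤ) * (1 - k)) / (qdfact k * qdfact m)

def qsum (p : ℕ) : K := ∑ x ∈ antidiagonal p, qterm x.1 x.2

lemma qint_mul_qterm_succ_left (k m : ℕ) :
    qint (2 * ((k : ℤ) + 1)) * qterm (k + 1) m = v ^ (-2 * (m : ℤ)) * qterm k m := by
  have hq : qint (2 * ((k : ℤ) + 1)) ≠ 0 := qint_ne_zero (by omega)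
  have hexp : 2 * (m : ℤ) * (1 - ((k + 1 : ℕ) : ℤ)) = -2 * m + 2 * m * (1 - k) := by
    push_cast; ring
  simp only [qterm, qdfact_succ, hexp, zpow_add₀ v_ne_zero]
  field_simp

lemma qint_mul_qterm_succ_right (k m : ℕ) :
    qint (2 * ((m : ℤ) + 1)) * qterm k (m + 1) = v ^ (2 * (1 - (k : ℤ))) * qterm k m := by
  have hq : qint (2 * ((m : ℤ) + 1)) ≠ 0 := qint_ne_zero (by omega)
  have hexp : 2 * ((m + 1 : ℕ) : ℤ) * (1 - k) = 2 * (1 - k) + 2 * m * (1 - k) := by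
    push_cast; ring
  simp only [qterm, qdfact_succ, hexp, zpow_add₀ v_ne_zero]
  field_simp

lemma qterm_swap (k m : ℕ) : qterm m k = v ^ (2 * (k : ℤ) - 2 * m) * qterm k m := by
  have hexp : 2 * (k : ℤ) * (1 - m) = (2 * k - 2 * m) + 2 * m * (1 - k) := by ring
  simp only [qterm, hexp, zpow_add₀ v_ne_zero]
  ring

lemma qint_two_mul_succ_mul_qsum_succ (p : ℕ) :
    qint (2 * ((p : ℤ) + 1)) * qsum (p + 1) =
      (v ^ (2 : ℤ) + v ^ (-2 * (p : ℤ))) * qsum p := by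
  have hsplit : ∀ x ∈ antidiagonal (p + 1), qint (2 * ((p : ℤ) + 1)) * qterm x.1 x.2 =
      v ^ (2 * (x.1 : ℤ)) * (qint (2 * (x.2 : ℤ)) * qterm x.1 x.2) +
        v ^ (-2 * (x.2 : ℤ)) * (qint (2 * (x.1 : ℤ)) * qterm x.1 x.2) := by
    intro x hx
    have hx : (x.1 : ℤ) + x.2 = p + 1 := by exact_mod_cast mem_antidiagonal.mp hx
    rw [show 2 * ((p : ℤ) + 1) = 2 * x.1 + 2 * x.2 by omega, qint_add, neg_mul]
    ring
  have hright : ∑ x ∈ antidiagonal (p + 1), v ^ (2 * (x.1 : ℤ)) * (qint (2 * (x.2 : ℤ)) *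
      qterm x.1 x.2) = v ^ (2 : ℤ) * qsum p := by
    rw [Nat.sum_antidiagonal_succ', qsum, mul_sum]
    simp only [Nat.cast_zero, mul_zero, qint_zero, zero_mul, zero_add, Nat.cast_add, Nat.cast_one]
    refine sum_congr rfl fun x _ => ?_
    rw [qint_mul_qterm_succ_right, ← mul_assoc, ← zpow_add₀ v_ne_zero]
    ring_nf
  have hleft : ∑ x ∈ antidiagonal (p + 1), v ^ (-2 * (x.2 : ℤ)) * (qint (2 * (x.1 : ℤ)) *
      qterm x.1 x.2) = v ^ (-2 * (p : ℤ)) * qsum p := by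
    rw [Nat.sum_antidiagonal_succ, qsum, ← Nat.sum_antidiagonal_swap, mul_sum]
    simp only [Nat.cast_zero, mul_zero, qint_zero, zero_mul, zero_add, Nat.cast_add,
      Nat.cast_one, Prod.fst_swap, Prod.snd_swap]
    refine sum_congr rfl fun x hx => ?_
    have hx : (x.1 : ℤ) + x.2 = p := by exact_mod_cast mem_antidiagonal.mp hx
    rw [qint_mul_qterm_succ_left, qterm_swap, ← mul_assoc, ← mul_assoc,
      ← zpow_add₀ v_ne_zero, ← zpow_add₀ v_ne_zero]
    congr 2
    omega
  rw [qsum, mul_sum, sum_congr rfl hsplit, sum_add_distrib, hright, hleft, add_mul]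

lemma qint_succ_mul_qsum_succ (p : ℕ) :
    qint ((p : ℤ) + 1) * qsum (p + 1) = v ^ (1 - (p : ℤ)) * qsum p := by
  set c : K := v ^ ((p : ℤ) + 1) + v ^ (-((p : ℤ) + 1))
  have hc : c ≠ 0 := left_ne_zero_of_mul (a := c) (b := qint ((p : ℤ) + 1)) <| by
    rw [← qint_two_mul]; exact qint_ne_zero (by omega)
  have hfactor : v ^ (2 : ℤ) + v ^ (-2 * (p : ℤ)) = c * v ^ (1 - (p : ℤ)) := by
    simp only [c, add_mul, ← zpow_add₀ v_ne_zero]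
    ring_nf
  apply mul_left_cancel₀ hc
  rw [← mul_assoc, ← qint_two_mul, qint_two_mul_succ_mul_qsum_succ, hfactor]
  ring

lemma qfact_mul_qsum (p : ℕ) : qfact p * qsum p = v ^ ((p : ℤ) * (3 - p) / 2) := by
  induction p with
  | zero => simp [qfact, qsum, qterm, qdfact]
  | succ p ih =>
    have hexp :
        ((p + 1 : ℕ) : ℤ) * (3 - (p + 1 : ℕ)) / 2 = (p : ℤ) * (3 - p) / 2 + (1 - p) := by
      rw [← Int.add_mul_ediv_right _ _ two_ne_zero]
      congr 1
      push_cast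
      ring
    rw [qfact_succ, mul_assoc, qint_succ_mul_qsum_succ, mul_left_comm, ih, hexp,
      zpow_add₀ v_ne_zero, mul_comm]

theorem stmt1 (p : ℕ) :
    qfact p * ∑ k ∈ Finset.range (p + 1),
      v ^ (-2 * (k : ℤ) * ((p : ℤ) - k) + 2 * ((p : ℤ) - k)) /
        (qdfact k * qdfact (p - k))
    = v ^ ((p : ℤ) * (3 - (p : ℤ)) / 2) := by
  rw [← qfact_mul_qsum, qsum, Nat.sum_antidiagonal_eq_sum_range_succ qterm]
  congr 1
  refine sum_congr rfl fun k hk => ?_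
  have hk : k ≤ p := Nat.lt_succ_iff.mp (mem_range.mp hk)
  rw [qterm, Nat.cast_sub hk]
  ring_nf
end
end

section
/- Let $a, b$ be nonnegative integers, and let $f, g, t_1, t_3$ be nonnegative integers with $f, g \le \min(a,b)$, $t_1 \le a - f - g$, $t_3 \le b - f - g$, not all of $f, g, t_1, t_3$ zero. Define $T(f,g,t_1,t_3) = \sum_{u=0}^{\min(a,b)} \sum_{r=0}^{a-u} \sum_{s=0}^{b-u} \sum_{y=0}^{\min(a-u-r,\,b-u-s)} \sum_{x=0}^{\min(r,s)} (-1)^{r+s} (v-v^{-1})^u \, v^{2(fr+gs) - u(u+1)/2 + u(f-x+t_1) - x(2g+f+t_3) + y(g+t_3) + t_3 s - s + t_1 r - r} \begin{bmatrix} t_3 \\ s-x-g+y \end{bmatrix} \begin{bmatrix} t_1 \\ r-f+u \end{bmatrix} \dfrac{1}{[g]!\,[f-u]!} \begin{bmatrix} g \\ y \end{bmatrix} \begin{bmatrix} f-u \\ x \end{bmatrix}$, where terms with $f - u < 0$ are omitted and Gaussian binomials with out-of-range lower index are $0$. Then $T(f,g,t_1,t_3) = 0$. Moreover $T(0,0,0,0)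 = 1$. -/
noncomputable section

/-- The quintuple sum $T(f,g,t_1,t_3)$ (depending also on $a,b$). -/
def Tsum (a b f g t1 t3 : ℕ) : K :=
  ∑ u ∈ Finset.range (min a b + 1), ∑ r ∈ Finset.range (a - u + 1),
    ∑ s ∈ Finset.range (b - u + 1),
      ∑ y ∈ Finset.range (min (a - u - r) (b - u - s) + 1),
        ∑ x ∈ Finset.range (min r s + 1),
          if u ≤ f then
            (-1 : K) ^ (r + s) * (v - v⁻¹) ^ u *
              v ^ (2 * ((f : ℤ) * r + (g : ℤ) * s)
                    - (u : ℤ) * ((u : ℤ) + 1) / 2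
                    + (u : ℤ) * ((f : ℤ) - x + t1)
                    - (x : ℤ) * (2 * (g : ℤ) + f + t3)
                    + (y : ℤ) * ((g : ℤ) + t3)
                    + (t3 : ℤ) * s - (s : ℤ) + (t1 : ℤ) * r - (r : ℤ)) *
              qbinomZ (t3 : ℤ) ((s : ℤ) - x - g + y) *
              qbinomZ (t1 : ℤ) ((r : ℤ) - f + u) *
              (1 / (qfact g * qfact (f - u))) *
              qbinom (g : ℤ) y * qbinom ((f : ℤ) - u) x
          else 0

/-
After the shifts `r ↦ f - u + r` and `s ↦ g + x - y + s` the summand is supported on a box and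
factors: `T` is a constant times three sums `∑_y [n, y] w^y` (over `r`, `y` and `s`) and a double
sum over `u` and `x`. The balanced `q`-binomial theorem
`∑_y [n, y] w^y = ∏_{k<n} (1 + v^(2k-n+1) w)` evaluates the three sums, and also the double sum, which after summing over `x` becomes
`(v - v⁻¹)^f v^(-f(f+1)/2) ∑_u [f, u] (-v^(1-f))^u`. For the values of `w` that occur, a factor
`1 - v^0` appears in the double sum if `f > 0`, in the `y`-sum if `g > 0`, in the `r`-sum if
`f = 0 < t1` and in the `s`-sum if `g = 0 < t3`.
-/

open Finset

lemma v_pow_ne_one {n : ℕ} (hn : n ≠ 0) : v ^ n ≠ 1 := by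
  intro h
  have hX : (Polynomial.X : Polynomial ℚ) ^ n = 1 := by
    apply RatFunc.algebraMap_injective ℚ
    simpa [v, RatFunc.algebraMap_X] using h
  simpa [hn] using congrArg Polynomial.natDegree hX

lemma v_zpow_ne_one {m : ℤ} (hm : m ≠ 0) : v ^ m ≠ 1 := by
  have hn := v_pow_ne_one (Int.natAbs_ne_zero.2 hm)
  rcases Int.natAbs_eq m with h | h <;> rw [h]
  · rwa [zpow_natCast]
  · rwa [zpow_neg, zpow_natCast, ne_eq, inv_eq_one]

lemma v_sub_v_inv_ne_zero : v - v⁻¹ ≠ 0 := by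
  rw [sub_ne_zero, ne_eq, ← mul_eq_one_iff_eq_inv₀ v_ne_zero, ← sq]
  exact v_pow_ne_one two_ne_zero

lemma qint_ne_zero_s15 {m : ℤ} (hm : m ≠ 0) : qint m ≠ 0 := by
  refine div_ne_zero (fun h => v_zpow_ne_one (mul_ne_zero two_ne_zero hm) ?_) v_sub_v_inv_ne_zero
  rw [two_mul, zpow_add₀ v_ne_zero]
  nth_rw 1 [sub_eq_zero.1 h]
  rw [← zpow_add₀ v_ne_zero, neg_add_cancel, zpow_zero]

lemma qint_eq_add (n k : ℤ) : qint n = v ^ k * qint (n - k) + v ^ (k - n) * qint k := by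
  simp only [qint, ← mul_div_assoc, ← add_div, mul_sub, ← zpow_add₀ v_ne_zero]
  ring_nf

lemma one_sub_v_zpow_two_mul (k f : ℤ) :
    1 - v ^ (2 * (k - f)) = v ^ (k - f) * (v - v⁻¹) * qint (f - k) := by
  rw [qint, mul_assoc, mul_div_cancel₀ _ v_sub_v_inv_ne_zero, mul_sub (v ^ (k - f)),
    ← zpow_add₀ v_ne_zero, ← zpow_add₀ v_ne_zero,
    show k - f + (f - k) = 0 by ring, show k - f + -(f - k) = 2 * (k - f) by ring, zpow_zero]

lemma qfact_zero : qfact 0 = 1 := prod_range_zero _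

lemma qfact_ne_zero (r : ℕ) : qfact r ≠ 0 :=
  prod_ne_zero_iff.2 fun i _ => qint_ne_zero_s15 (by positivity)

lemma prod_qint_mul_qfact {N k : ℕ} (h : k ≤ N) :
    (∏ i ∈ range k, qint (N - i)) * qfact (N - k) = qfact N := by
  induction k with
  | zero => simp
  | succ k ih =>
    obtain ⟨m, hm⟩ : ∃ m, N - k = m + 1 := ⟨N - k - 1, by omega⟩
    rw [← ih (by omega), prod_range_succ, mul_assoc, hm, show N - (k + 1) = m by omega, qfact,
      qfact, prod_range_succ, show (N : ℤ) - k = m + 1 by omega]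
    ring

lemma qbinom_zero_right (m : ℤ) : qbinom m 0 = 1 := by simp [qbinom, qfact_zero]

lemma qbinom_eq_zero_of_lt {m : ℤ} {r : ℕ} (hm : 0 ≤ m) (h : m < r) : qbinom m r = 0 := by
  rw [qbinom, prod_eq_zero (i := m.toNat) (mem_range.2 (by omega)) (by simp [hm, qint_zero]),
    zero_div]

lemma le_of_qbinom_ne_zero {m : ℤ} {r : ℕ} (hm : 0 ≤ m) (h : qbinom m r ≠ 0) : (r : ℤ) ≤ m :=
  not_lt.1 fun hlt => h (qbinom_eq_zero_of_lt hm hlt)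

lemma qbinomZ_ne_zero {m r : ℤ} (hm : 0 ≤ m) (h : qbinomZ m r ≠ 0) : 0 ≤ r ∧ r ≤ m := by
  by_cases hr : 0 ≤ r
  · rw [qbinomZ, if_pos hr] at h
    exact ⟨hr, by simpa [hr] using le_of_qbinom_ne_zero hm h⟩
  · simp [qbinomZ, hr] at h

lemma qbinomZ_natCast (m : ℤ) (r : ℕ) : qbinomZ m r = qbinom m r := by
  rw [qbinomZ, if_pos (Nat.cast_nonneg r), Int.toNat_natCast]

lemma qbinom_natCast_eq_div {N k : ℕ} (h : k ≤ N) :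
    qbinom N k = qfact N / (qfact k * qfact (N - k)) := by
  rw [qbinom, ← prod_qint_mul_qfact h]
  field_simp [qfact_ne_zero]

lemma qbinom_succ_succ (m : ℤ) (k : ℕ) :
    qbinom (m + 1) (k + 1) = v ^ (k + 1) * qbinom m (k + 1) + v ^ ((k : ℤ) - m) * qbinom m k := by
  have hsplit := qint_eq_add (m + 1) (k + 1)
  rw [show m + 1 - (k + 1) = m - k by ring, show (k : ℤ) + 1 - (m + 1) = k - m by ring] at hsplit
  have hnum : ∏ i ∈ range (k + 1), qint (m + 1 - i)
      = (∏ i ∈ range k, qint (m - i)) * qint (m + 1) := by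
    simp only [prod_range_succ', Nat.cast_add, Nat.cast_one, Nat.cast_zero, sub_zero,
      add_sub_add_right_eq_sub]
  have hfact : qfact (k + 1) = qfact k * qint (k + 1) := by simp [qfact, prod_range_succ]
  have hk := qint_ne_zero_s15 (show (k : ℤ) + 1 ≠ 0 by omega)
  have hf := qfact_ne_zero k
  rw [qbinom, qbinom, qbinom, hnum, prod_range_succ, hfact, hsplit, ← zpow_natCast]
  push_cast
  field_simp

def qbinomSum (n : ℕ) (w : K) : K := ∑ y ∈ range (n + 1), qbinom n y * w ^ y

theorem qbinomSum_eq_prod (n : ℕ) (w : K) :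
    qbinomSum n w = ∏ k ∈ range n, (1 + v ^ (2 * (k : ℤ) - n + 1) * w) := by
  rw [qbinomSum]
  induction n generalizing w with
  | zero => simp [qbinom_zero_right]
  | succ n ih =>
    set F : ℕ → K := fun y => qbinom n y * (v * w) ^ y
    have hpascal (y : ℕ) :
        qbinom ↑(n + 1) (y + 1) * w ^ (y + 1) = F (y + 1) + v ^ (-(n : ℤ)) * w * F y := by
      rw [Nat.cast_succ, qbinom_succ_succ, zpow_sub₀ v_ne_zero, zpow_natCast, zpow_neg]
      field_simp [v_ne_zero]
      ring
    have hshift : ∑ y ∈ range (n + 1), F (y + 1) + 1 = ∑ y ∈ range (n + 1), F y := by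
      have htop : F (n + 1) = 0 := by
        simp only [F, qbinom_eq_zero_of_lt (r := n + 1) (Nat.cast_nonneg n) (by push_cast; omega),
          zero_mul]
      have h := sum_range_succ' F (n + 1)
      rw [sum_range_succ, htop, add_zero] at h
      simp [h, F, qbinom_zero_right]
    -- `q`-Pascal gives `qbinomSum (n + 1) w = (1 + v^(-n) w) * qbinomSum n (v w)`.
    calc ∑ y ∈ range (n + 1 + 1), qbinom ↑(n + 1) y * w ^ y
        = ∑ y ∈ range (n + 1), F (y + 1) + 1 + v ^ (-(n : ℤ)) * w * ∑ y ∈ range (n + 1), F y := by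
          simp only [sum_range_succ' _ (n + 1), hpascal, sum_add_distrib, mul_sum,
            qbinom_zero_right]
          ring
      _ = (1 + v ^ (-(n : ℤ)) * w) * ∏ k ∈ range n, (1 + v ^ (2 * (k : ℤ) - n + 1) * (v * w)) := by
          rw [hshift, ← ih]; ring
      _ = _ := by
          rw [prod_range_succ' _ n, mul_comm]
          push_cast
          congr 1
          · refine prod_congr rfl fun k _ => ?_
            rw [← mul_assoc, ← zpow_add_one₀ v_ne_zero]
            ring_nf
          · ring_nf

theorem qbinomSum_neg_zpow_eq_zero {n k : ℕ} {e : ℤ} (hk : k < n) (he : e + 2 * k + 1 = n) :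
    qbinomSum n (-v ^ e) = 0 := by
  rw [qbinomSum_eq_prod]
  refine prod_eq_zero (mem_range.2 hk) ?_
  rw [mul_neg, ← zpow_add₀ v_ne_zero, show 2 * (k : ℤ) - n + 1 + e = 0 by omega, zpow_zero,
    add_neg_cancel]

lemma prod_zpow_eq_zpow_sum {G₀ ι : Type*} [CommGroupWithZero G₀] {a : G₀} (ha : a ≠ 0)
    (s : Finset ι) (e : ι → ℤ) : ∏ i ∈ s, a ^ e i = a ^ ∑ i ∈ s, e i := by
  classical
  induction s using Finset.induction_on with
  | empty => simp
  | insert i s hi ih => rw [prod_insert hi, sum_insert hi, ih, zpow_add₀ ha]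

lemma two_mul_sum_range_sub (m f : ℕ) :
    2 * ∑ k ∈ range m, ((k : ℤ) - f) = m * (m - 1) - 2 * m * f := by
  induction m with
  | zero => simp
  | succ m ih => rw [sum_range_succ, mul_add, ih]; push_cast; ring

lemma sum_range_eq_of_vanish {M : Type*} [AddCommMonoid M] {F : ℕ → M} {m n : ℕ}
    (h : ∀ i, min m n ≤ i → F i = 0) : ∑ i ∈ range m, F i = ∑ i ∈ range n, F i := by
  rw [eventually_constant_sum h (min_le_left m n), eventually_constant_sum h (min_le_right m n)]

lemma sum_range_eq_sum_range_add {M : Type*} [AddCommMonoid M] {F : ℕ → M} {N c n : ℕ}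
    (hlo : ∀ i < c, F i = 0) (hhi : ∀ i, c + n ≤ i → F i = 0) (hN : c + n ≤ N) :
    ∑ i ∈ range N, F i = ∑ i ∈ range n, F (c + i) := by
  rw [eventually_constant_sum hhi hN, sum_range_add,
    sum_eq_zero fun i hi => hlo i (mem_range.1 hi), zero_add]

/-- The factor of the summand of `Tsum` that involves `u` and `x`, once `r` and `s` are shifted
as in `Tsum_eq_sum_shifted`. -/
def uxTerm (f u x : ℕ) : K :=
  (-1) ^ u * (v - v⁻¹) ^ u * v ^ ((u : ℤ) * (1 - f) - u * (u + 1) / 2) / qfact (f - u) *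
    (qbinom (f - u : ℕ) x * (-v ^ (-((u : ℤ) + f + 1))) ^ x)

/-- The sum over `x` is `∏_{k < f-u} (1 - v^(2(k-f)))`, and the factors
`1 - v^(2(k-f)) = v^(k-f) (v - v⁻¹) [f-k]` collect into `(v - v⁻¹)^(f-u) [f]!/[u]!`. -/
lemma sum_uxTerm_eq {f u : ℕ} (hu : u ≤ f) :
    ∑ x ∈ range (f - u + 1), uxTerm f u x
      = (v - v⁻¹) ^ f * v ^ (-((f : ℤ) * (f + 1) / 2))
        * (qbinom f u * (-v ^ (1 - (f : ℤ))) ^ u) := by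
  have hfactor : ∀ k ∈ range (f - u),
      1 + v ^ (2 * (k : ℤ) - (f - u : ℕ) + 1) * -v ^ (-((u : ℤ) + f + 1))
        = v ^ ((k : ℤ) - f) * (v - v⁻¹) * qint (f - k) := fun k _ => by
    rw [← one_sub_v_zpow_two_mul, mul_neg, ← zpow_add₀ v_ne_zero, ← sub_eq_add_neg]
    congr 2
    push_cast [hu]
    ring
  have hqint : ∏ k ∈ range (f - u), qint ((f : ℤ) - k) = qfact f / qfact u := by
    rw [eq_div_iff (qfact_ne_zero u), ← prod_qint_mul_qfact (Nat.sub_le f u), Nat.sub_sub_self hu]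
  have hexp : (u : ℤ) * (1 - f) - u * (u + 1) / 2 + ∑ k ∈ range (f - u), ((k : ℤ) - f)
      = -((f : ℤ) * (f + 1) / 2) + (1 - f) * u := by
    have hsum := two_mul_sum_range_sub (f - u) f
    have hu2 := Int.two_mul_ediv_two_of_even (Int.even_mul_succ_self u)
    have hf2 := Int.two_mul_ediv_two_of_even (Int.even_mul_succ_self f)
    push_cast [hu] at hsum
    apply mul_left_cancel₀ (two_ne_zero (α := ℤ))
    linear_combination hsum - hu2 + hf2
  have hpow : (v - v⁻¹) ^ u * (v - v⁻¹) ^ (f - u) = (v - v⁻¹) ^ f := by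
    rw [← pow_add, Nat.add_sub_cancel' hu]
  simp only [uxTerm]
  rw [← mul_sum, ← qbinomSum.eq_1, qbinomSum_eq_prod, prod_congr rfl hfactor, prod_mul_distrib,
    prod_mul_distrib, prod_zpow_eq_zpow_sum v_ne_zero, prod_const, card_range, hqint,
    qbinom_natCast_eq_div hu, neg_pow (v ^ _), ← zpow_natCast (v ^ _), ← zpow_mul, ← hpow]
  have hv := congrArg (v ^ ·) hexp
  simp only [zpow_add₀ v_ne_zero] at hv
  linear_combination (-1) ^ u * (v - v⁻¹) ^ u * (v - v⁻¹) ^ (f - u) * qfact f /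
    (qfact u * qfact (f - u)) * hv

theorem sum_uxTerm_eq_zero {f : ℕ} (hf : 0 < f) :
    ∑ u ∈ range (f + 1), ∑ x ∈ range (f - u + 1), uxTerm f u x = 0 := by
  rw [sum_congr rfl fun u hu => sum_uxTerm_eq (Nat.lt_succ_iff.1 (mem_range.1 hu)), ← mul_sum,
    ← qbinomSum.eq_1, qbinomSum_neg_zpow_eq_zero (k := f - 1) (by omega) (by omega), mul_zero]

def tsumTerm (f g t1 t3 u r s y x : ℕ) : K :=
  if u ≤ f then
    (-1 : K) ^ (r + s) * (v - v⁻¹) ^ u *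
      v ^ (2 * ((f : ℤ) * r + (g : ℤ) * s)
            - (u : ℤ) * ((u : ℤ) + 1) / 2
            + (u : ℤ) * ((f : ℤ) - x + t1)
            - (x : ℤ) * (2 * (g : ℤ) + f + t3)
            + (y : ℤ) * ((g : ℤ) + t3)
            + (t3 : ℤ) * s - (s : ℤ) + (t1 : ℤ) * r - (r : ℤ)) *
      qbinomZ (t3 : ℤ) ((s : ℤ) - x - g + y) *
      qbinomZ (t1 : ℤ) ((r : ℤ) - f + u) *
      (1 / (qfact g * qfact (f - u))) *
      qbinom (g : ℤ) y * qbinom ((f : ℤ) - u) x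
  else 0

section Support

variable {f g t1 t3 u r s y x : ℕ}

lemma tsumTerm_support (h : tsumTerm f g t1 t3 u r s y x ≠ 0) :
    u ≤ f ∧ x ≤ f - u ∧ y ≤ g ∧ f ≤ r + u ∧ r + u ≤ f + t1 ∧ g + x ≤ s + y ∧
      s + y ≤ g + x + t3 := by
  rw [tsumTerm, ite_ne_right_iff] at h
  obtain ⟨hu, h⟩ := h
  simp only [ne_eq, mul_eq_zero, not_or] at h
  obtain ⟨⟨⟨⟨⟨-, hs⟩, hr⟩, -⟩, hy⟩, hx⟩ := h
  have hx' := le_of_qbinom_ne_zero (by omega) hx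
  have hy' := le_of_qbinom_ne_zero (by omega) hy
  have hr' := qbinomZ_ne_zero (by omega) hr
  have hs' := qbinomZ_ne_zero (by omega) hs
  omega

lemma tsumTerm_eq_zero
    (h : ¬(u ≤ f ∧ x ≤ f - u ∧ y ≤ g ∧ f ≤ r + u ∧ r + u ≤ f + t1 ∧ g + x ≤ s + y ∧
      s + y ≤ g + x + t3)) : tsumTerm f g t1 t3 u r s y x = 0 :=
  not_not.1 (mt tsumTerm_support h)

end Support

/-- In the variables `r - (f - u)` and `s - (g + x - y)` the support of the summand is a box. -/
theorem Tsum_eq_sum_shifted {a b f g t1 t3 : ℕ} (ht1 : t1 + f + g ≤ a) (ht3 : t3 + f + g ≤ b) :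
    Tsum a b f g t1 t3
      = ∑ u ∈ range (f + 1), ∑ r ∈ range (t1 + 1), ∑ y ∈ range (g + 1), ∑ x ∈ range (f - u + 1),
          ∑ s ∈ range (t3 + 1), tsumTerm f g t1 t3 u (f - u + r) (g + x - y + s) y x := by
  unfold Tsum
  refine (sum_range_eq_of_vanish fun u hu => ?_).trans (sum_congr rfl fun u hu => ?_)
  · exact sum_eq_zero fun r _ => sum_eq_zero fun s _ => sum_eq_zero fun y _ =>
      sum_eq_zero fun x _ => tsumTerm_eq_zero (by omega)
  rw [mem_range] at hu
  refine (sum_range_eq_sum_range_add (c := f - u) (n := t1 + 1) ?_ ?_ (by omega)).trans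
    (sum_congr rfl fun r hr => ?_)
  · exact fun r hr => sum_eq_zero fun s _ => sum_eq_zero fun y _ =>
      sum_eq_zero fun x _ => tsumTerm_eq_zero (by omega)
  · exact fun r hr => sum_eq_zero fun s _ => sum_eq_zero fun y _ =>
      sum_eq_zero fun x _ => tsumTerm_eq_zero (by omega)
  rw [mem_range] at hr
  calc _ = ∑ s ∈ range (b - u + 1), ∑ y ∈ range (g + 1), ∑ x ∈ range (f - u + 1),
        tsumTerm f g t1 t3 u (f - u + r) s y x := by
        refine sum_congr rfl fun s hs => ?_
        rw [mem_range] at hs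
        refine (sum_range_eq_of_vanish fun y hy => ?_).trans (sum_congr rfl fun y hy => ?_)
        · exact sum_eq_zero fun x hx => tsumTerm_eq_zero (by rw [mem_range] at hx; omega)
        · exact sum_range_eq_of_vanish fun x hx => tsumTerm_eq_zero (by omega)
    _ = ∑ y ∈ range (g + 1), ∑ x ∈ range (f - u + 1), ∑ s ∈ range (b - u + 1),
        tsumTerm f g t1 t3 u (f - u + r) s y x := by
        rw [sum_comm]
        exact sum_congr rfl fun y _ => sum_comm
    _ = _ := by
        refine sum_congr rfl fun y hy => sum_congr rfl fun x hx => ?_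
        rw [mem_range] at hx hy
        exact sum_range_eq_sum_range_add (fun s hs => tsumTerm_eq_zero (by omega))
          (fun s hs => tsumTerm_eq_zero (by omega)) (by omega)

lemma tsumTerm_shifted_eq {f g t1 t3 u r s y x : ℕ} (hu : u ≤ f) (hy : y ≤ g) :
    tsumTerm f g t1 t3 u (f - u + r) (g + x - y + s) y x
      = (-1) ^ (f + g) * v ^ (2 * (f : ℤ) * f + 2 * g * g + t3 * g - g + t1 * f - f) / qfact g
        * (qbinom t1 r * (-v ^ ((t1 : ℤ) - 1 + 2 * f)) ^ r)
        * (qbinom g y * (-v ^ (1 - (g : ℤ))) ^ y)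
        * uxTerm f u x * (qbinom t3 s * (-v ^ ((t3 : ℤ) - 1 + 2 * g)) ^ s) := by
  have hsign : (-1 : K) ^ (f - u + r + (g + x - y + s))
      = (-1) ^ (f + g) * (-1) ^ r * (-1) ^ y * (-1) ^ u * (-1) ^ x * (-1) ^ s := by
    simp only [← pow_add]
    rw [neg_one_pow_eq_pow_mod_two, neg_one_pow_eq_pow_mod_two (n := f + g + r + y + u + x + s)]
    congr 1
    omega
  have hr : ((f - u + r : ℕ) : ℤ) = f - u + r := by omega
  have hs : ((g + x - y + s : ℕ) : ℤ) = g + x - y + s := by omega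
  rw [tsumTerm, if_pos hu, uxTerm, hsign, hr, hs, show (f : ℤ) - u + r - f + u = r by ring,
    show (g : ℤ) + x - y + s - x - g + y = s by ring, qbinomZ_natCast, qbinomZ_natCast,
    Nat.cast_sub hu]
  simp only [neg_pow (v ^ (_ : ℤ)), ← zpow_natCast (v ^ (_ : ℤ)), ← zpow_mul]
  have hexp : v ^ (2 * ((f : ℤ) * (f - u + r) + g * (g + x - y + s)) - u * (u + 1) / 2
        + u * (f - x + t1) - x * (2 * g + f + t3) + y * (g + t3) + t3 * (g + x - y + s)
        - (g + x - y + s) + t1 * (f - u + r) - (f - u + r))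
      = v ^ (2 * (f : ℤ) * f + 2 * g * g + t3 * g - g + t1 * f - f)
        * v ^ (((t1 : ℤ) - 1 + 2 * f) * r) * v ^ ((1 - (g : ℤ)) * y)
        * v ^ ((u : ℤ) * (1 - f) - u * (u + 1) / 2) * v ^ (-((u : ℤ) + f + 1) * x)
        * v ^ (((t3 : ℤ) - 1 + 2 * g) * s) := by
    simp only [← zpow_add₀ v_ne_zero]
    congr 1
    ring
  rw [hexp]
  ring

theorem Tsum_eq_mul {a b f g t1 t3 : ℕ} (ht1 : t1 + f + g ≤ a) (ht3 : t3 + f + g ≤ b) :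
    Tsum a b f g t1 t3
      = (-1) ^ (f + g) * v ^ (2 * (f : ℤ) * f + 2 * g * g + t3 * g - g + t1 * f - f) / qfact g
        * qbinomSum t1 (-v ^ ((t1 : ℤ) - 1 + 2 * f)) * qbinomSum g (-v ^ (1 - (g : ℤ)))
        * (∑ u ∈ range (f + 1), ∑ x ∈ range (f - u + 1), uxTerm f u x)
        * qbinomSum t3 (-v ^ ((t3 : ℤ) - 1 + 2 * g)) := by
  set C : K := (-1) ^ (f + g) * v ^ (2 * (f : ℤ) * f + 2 * g * g + t3 * g - g + t1 * f - f)
    / qfact g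
  set R : ℕ → K := fun r => qbinom t1 r * (-v ^ ((t1 : ℤ) - 1 + 2 * f)) ^ r
  set G : ℕ → K := fun y => qbinom g y * (-v ^ (1 - (g : ℤ))) ^ y
  set S : ℕ → K := fun s => qbinom t3 s * (-v ^ ((t3 : ℤ) - 1 + 2 * g)) ^ s
  calc Tsum a b f g t1 t3
      = ∑ u ∈ range (f + 1), ∑ r ∈ range (t1 + 1), ∑ y ∈ range (g + 1), ∑ x ∈ range (f - u + 1),
          ∑ s ∈ range (t3 + 1), C * R r * G y * uxTerm f u x * S s := by
        rw [Tsum_eq_sum_shifted ht1 ht3]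
        refine sum_congr rfl fun u hu => sum_congr rfl fun r _ => sum_congr rfl fun y hy =>
          sum_congr rfl fun x _ => sum_congr rfl fun s _ => ?_
        rw [mem_range] at hu hy
        exact tsumTerm_shifted_eq (by omega) (by omega)
    _ = _ := by simp only [← mul_sum, ← sum_mul, qbinomSum, R, G, S]

theorem stmt15_general (a b f g t1 t3 : ℕ)
    (ht1 : t1 + f + g ≤ a) (ht3 : t3 + f + g ≤ b)
    (hne : ¬(f = 0 ∧ g = 0 ∧ t1 = 0 ∧ t3 = 0)) :
    Tsum a b f g t1 t3 = 0 ∧ Tsum a b 0 0 0 0 = 1 := by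
  refine ⟨?_, ?_⟩
  · rw [Tsum_eq_mul ht1 ht3]
    obtain hf | hg | ⟨rfl, rfl, hpos⟩ | ⟨rfl, rfl, hpos⟩ :
        0 < f ∨ 0 < g ∨ (f = 0 ∧ g = 0 ∧ 0 < t1) ∨ (f = 0 ∧ g = 0 ∧ 0 < t3) := by omega
    · rw [sum_uxTerm_eq_zero hf, mul_zero, zero_mul]
    · rw [qbinomSum_neg_zpow_eq_zero (n := g) (k := g - 1) (by omega) (by omega)]; simp
    · rw [qbinomSum_neg_zpow_eq_zero (k := 0) hpos (by omega)]; simp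
    · rw [qbinomSum_neg_zpow_eq_zero (k := 0) hpos (by omega)]; simp
  · rw [Tsum_eq_mul (by omega) (by omega)]
    simp [qbinomSum, uxTerm, qfact_zero, qbinom_zero_right]

theorem stmt15 (a b f g t1 t3 : ℕ)
    (hf : f ≤ min a b) (hg : g ≤ min a b)
    (ht1 : t1 + f + g ≤ a) (ht3 : t3 + f + g ≤ b)
    (hne : ¬(f = 0 ∧ g = 0 ∧ t1 = 0 ∧ t3 = 0)) :
    Tsum a b f g t1 t3 = 0 ∧ Tsum a b 0 0 0 0 = 1 :=
  stmt15_general a b f g t1 t3 ht1 ht3 hne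
end
end
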